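/- The subgroup of GL(2,ℤ) generated by A = [[2,-1],[1,0]] and B = [[0,1],[1,0]] is isomorphic to the infinite dihedral group D_∞. -/

import Mathlib

/-- `A = !![2,-1;1,0]` as an element of `GL(2,ℤ)`. -/
def Aunit : Matrix.GeneralLinearGroup (Fin 2) ℤ :=
  ⟨!![2, -1; 1, 0], !![0, 1; -1, 2],
    by simp [Matrix.mul_fin_two, Matrix.one_fin_two],
    by simp [Matrix.mul_fin_two, Matrix.one_fin_two]⟩

/-- `B = !![0,1;1,0]` as an element of `GL(2,ℤ)`. -/
def Bunit : Matrix.GeneralLinearGroup (Fin 2) ℤ :=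
  ⟨!![0, 1; 1, 0], !![0, 1; 1, 0],
    by simp [Matrix.mul_fin_two, Matrix.one_fin_two],
    by simp [Matrix.mul_fin_two, Matrix.one_fin_two]⟩

/-!
Sending the rotation `r 1` to `A` and the reflection `sr 0` to `B` defines a homomorphism
`D_∞ → GL(2,ℤ)`, since `B² = 1` and `BAB = A⁻¹`. Its image is the subgroup generated by `A` and `B`,
and it is injective: `A = 1 + N` with `N² = 0`, so `Aⁿ = 1 + nN` and `A` has infinite order, while
`B` is not a power of `A` because `det B = -1` and `det A = 1`.
-/

namespace DihedralGroup

variable {G : Type*} [Group G] {a b : G}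

theorem mul_zpow_eq_zpow_neg_mul (hb : b * b = 1) (hab : b * a * b = a⁻¹) (i : ℤ) :
    b * a ^ i = a ^ (-i) * b := by
  have : SemiconjBy b a a⁻¹ := by
    rw [SemiconjBy, ← hab, mul_assoc, mul_assoc, hb, mul_one]
  simpa only [inv_zpow'] using (this.zpow_right i).eq

theorem zpow_mul_eq_mul_zpow_neg (hb : b * b = 1) (hab : b * a * b = a⁻¹) (i : ℤ) :
    a ^ i * b = b * a ^ (-i) := by
  rw [mul_zpow_eq_zpow_neg_mul hb hab, neg_neg]

def liftInfinite (hb : b * b = 1) (hab : b * a * b = a⁻¹) : DihedralGroup 0 →* G where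
  toFun
    | r (i : ℤ) => a ^ i
    | sr (i : ℤ) => b * a ^ i
  map_one' := zpow_zero a
  map_mul' := by
    have r_sr (i j : ℤ) : b * a ^ (j - i) = a ^ i * (b * a ^ j) := by
      rw [← mul_assoc, zpow_mul_eq_mul_zpow_neg hb hab, mul_assoc, ← zpow_add, sub_eq_neg_add]
    have sr_r (i j : ℤ) : b * a ^ (i + j) = b * a ^ i * a ^ j := by
      rw [mul_assoc, zpow_add]
    have sr_sr (i j : ℤ) : a ^ (j - i) = b * a ^ i * (b * a ^ j) := by
      rw [mul_zpow_eq_zpow_neg_mul hb hab, mul_assoc, ← mul_assoc b, hb, one_mul, ← zpow_add,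
        sub_eq_neg_add]
    -- `ZMod 0` is `ℤ` only up to unfolding, so the cases are closed by `exact` rather than `rw`.
    rintro (i | i) (j | j)
    exacts [zpow_add a i j, r_sr i j, sr_r i j, sr_sr i j]

theorem liftInfinite_injective (hb : b * b = 1) (hab : b * a * b = a⁻¹)
    (ha : ¬IsOfFinOrder a) (hba : b ∉ Subgroup.zpowers a) :
    Function.Injective (liftInfinite hb hab) := by
  rw [injective_iff_map_eq_one]
  rintro ((i : ℤ) | (i : ℤ)) h
  · exact congrArg r (injective_zpow_iff_not_isOfFinOrder.mpr ha (h.trans (zpow_zero a).symm))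
  · refine absurd (Subgroup.mem_zpowers_iff.mpr ⟨-i, ?_⟩) hba
    rw [zpow_neg, eq_inv_of_mul_eq_one_left h]

theorem range_liftInfinite (hb : b * b = 1) (hab : b * a * b = a⁻¹) :
    (liftInfinite hb hab).range = Subgroup.closure {a, b} := by
  have ha : a ∈ Subgroup.closure {a, b} := Subgroup.subset_closure (by simp)
  have hb' : b ∈ Subgroup.closure {a, b} := Subgroup.subset_closure (by simp)
  refine le_antisymm ?_ ((Subgroup.closure_le _).mpr (Set.insert_subset_iff.mpr ⟨?_, ?_⟩))
  · rintro _ ⟨i | i, rfl⟩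
    exacts [Subgroup.zpow_mem _ ha _, Subgroup.mul_mem _ hb' (Subgroup.zpow_mem _ ha _)]
  · exact ⟨r 1, zpow_one a⟩
  · exact Set.singleton_subset_iff.mpr ⟨sr 0, mul_eq_left.mpr (zpow_zero a)⟩

noncomputable def closurePairEquiv (hb : b * b = 1) (hab : b * a * b = a⁻¹)
    (ha : ¬IsOfFinOrder a) (hba : b ∉ Subgroup.zpowers a) :
    Subgroup.closure {a, b} ≃* DihedralGroup 0 :=
  (MulEquiv.subgroupCongr (range_liftInfinite hb hab).symm).trans
    (MonoidHom.ofInjective (liftInfinite_injective hb hab ha hba)).symm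

end DihedralGroup

open Matrix

theorem Bunit_mul_self : Bunit * Bunit = 1 := by
  ext i j; fin_cases i <;> fin_cases j <;> rfl

theorem Bunit_mul_Aunit_mul_Bunit : Bunit * Aunit * Bunit = Aunit⁻¹ := by
  ext i j; fin_cases i <;> fin_cases j <;> rfl

theorem val_Aunit_pow (n : ℕ) :
    ((Aunit ^ n : GL (Fin 2) ℤ) : Matrix (Fin 2) (Fin 2) ℤ) = !![(n : ℤ) + 1, -n; n, 1 - n] := by
  induction n with
  | zero => simp [one_fin_two]
  | succ n ih =>
    rw [pow_succ, Units.val_mul, ih]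
    ext i j
    fin_cases i <;> fin_cases j <;> simp [Aunit] <;> ring

theorem not_isOfFinOrder_Aunit : ¬IsOfFinOrder Aunit := by
  rw [isOfFinOrder_iff_pow_eq_one]
  rintro ⟨n, hn, h⟩
  have h10 : ((Aunit ^ n : GL (Fin 2) ℤ) : Matrix (Fin 2) (Fin 2) ℤ) 1 0 =
      (1 : GL (Fin 2) ℤ).val 1 0 := by
    rw [h]
  rw [val_Aunit_pow] at h10
  simp at h10
  omega

theorem Bunit_notMem_zpowers_Aunit : Bunit ∉ Subgroup.zpowers Aunit := by
  have hA : Aunit ∈ GeneralLinearGroup.det.ker := by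
    rw [MonoidHom.mem_ker]; ext; simp [Aunit, det_fin_two]
  have hB : Bunit ∉ GeneralLinearGroup.det.ker := by
    rw [MonoidHom.mem_ker, Units.ext_iff]; simp [Bunit, det_fin_two]
  exact fun h => hB (Subgroup.zpowers_le.mpr hA h)

/-- The subgroup of `GL(2,ℤ)` generated by `A = !![2,-1;1,0]` and `B = !![0,1;1,0]`
is isomorphic to the infinite dihedral group `D_∞` (Mathlib's `DihedralGroup 0`). -/
theorem stmt5 :
    Nonempty ((Subgroup.closure {Aunit, Bunit} : Subgroup (Matrix.GeneralLinearGroup (Fin 2) ℤ))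
      ≃* DihedralGroup 0) :=
  ⟨DihedralGroup.closurePairEquiv Bunit_mul_self Bunit_mul_Aunit_mul_Bunit not_isOfFinOrder_Aunit
    Bunit_notMem_zpowers_Aunit⟩
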